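/- arXiv:2006.15546 — 2 statements merged into one kernel-verified Lean document; each statement's English description precedes it below -/
import Mathlib

section
/- Let (f,a) and (g,b) be elements of the partial wreath product IS_m ≀_p IS_n. Then (f,a) L (g,b) (Green's L-relation) if and only if ran(a) = ran(b) and for every z ∈ ran(a) one has g^{b^{-1}}(z) L f^{a^{-1}}(z) in IS_m, i.e. ran(g^{b^{-1}}(z)) = ran(f^{a^{-1}}(z)), where a^{-1}, b^{-1} denote the inverse partial bijections of a, b. -/
open scoped Classical

/-- `IS n` is the full inverse symmetric semigroup: all partial bijections of `Fin n`;
multiplication is composition of partial maps (maps acting on the right). -/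
abbrev IS (n : ℕ) : Type := PEquiv (Fin n) (Fin n)

noncomputable section
namespace ISW

instance {n : ℕ} : Mul (IS n) := ⟨PEquiv.trans⟩
instance {n : ℕ} : One (IS n) := ⟨PEquiv.refl _⟩

/-- The domain of a partial bijection. -/
def pdom {n : ℕ} (f : IS n) : Set (Fin n) := {x | (f x).isSome}

/-- The range of a partial bijection. -/
def pran {n : ℕ} (f : IS n) : Set (Fin n) := {y | (f.symm y).isSome}

/-- Green's R-relation on a semigroup (with identity): `u R v` iff `uS = vS`. -/
def GreenR {S : Type*} [Mul S] (u v : S) : Prop :=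
  {w | ∃ s, w = u * s} = {w | ∃ s, w = v * s}

/-- Green's L-relation on a semigroup (with identity): `u L v` iff `Su = Sv`. -/
def GreenL {S : Type*} [Mul S] (u v : S) : Prop :=
  {w | ∃ s, w = s * u} = {w | ∃ s, w = s * v}

/-- An R-cross-section: a subsemigroup containing exactly one element of every
Green R-class. -/
def IsRCrossSection {S : Type*} [Mul S] (T : Set S) : Prop :=
  (∀ a ∈ T, ∀ b ∈ T, a * b ∈ T) ∧ ∀ x : S, ∃! t, t ∈ T ∧ GreenR x t

/-- An L-cross-section: a subsemigroup containing exactly one element of every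
Green L-class. -/
def IsLCrossSection {S : Type*} [Mul S] (T : Set S) : Prop :=
  (∀ a ∈ T, ∀ b ∈ T, a * b ∈ T) ∧ ∀ x : S, ∃! t, t ∈ T ∧ GreenL x t

/-- `φ` realizes a semigroup isomorphism from `T₁` onto `T₂`. -/
def IsSemiIso {S₁ S₂ : Type*} [Mul S₁] [Mul S₂] (T₁ : Set S₁) (T₂ : Set S₂)
    (φ : S₁ → S₂) : Prop :=
  Set.BijOn φ T₁ T₂ ∧ ∀ a ∈ T₁, ∀ b ∈ T₁, φ (a * b) = φ a * φ b

/-- The partial wreath product `IS m ≀_p IS n`: pairs `(f, a)` with `a ∈ IS n` and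
`f` a partial map from `Fin n` to `IS m` whose domain equals the domain of `a`. -/
structure PW (m n : ℕ) where
  base : IS n
  fib : Fin n → Option (IS m)
  dom_eq : ∀ x, (fib x).isSome ↔ (base x).isSome

/-- Multiplication of the partial wreath product: `(f,a)·(g,b) = (f g^a, ab)`. -/
instance {m n : ℕ} : Mul (PW m n) where
  mul u v :=
    { base := u.base * v.base
      fib := fun x => Option.map₂ (· * ·) (u.fib x) ((u.base x).bind v.fib)
      dom_eq := by
        intro x
        show _ ↔ (((u.base x).bind v.base)).isSome
        cases h : u.base x with
        | none =>
          have : u.fib x = none := by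
            have := (u.dom_eq x)
            simp [h] at this
            simpa using Option.not_isSome_iff_eq_none.mp (by simp [this])
          simp [h, this, Option.map₂]
        | some y =>
          have hf : (u.fib x).isSome := (u.dom_eq x).mpr (by simp [h])
          obtain ⟨s, hs⟩ := Option.isSome_iff_exists.mp hf
          cases h2 : v.base y with
          | none =>
            have : v.fib y = none := by
              have := (v.dom_eq y)
              simp [h2] at this
              simpa using Option.not_isSome_iff_eq_none.mp (by simp [this])
            simp [h, h2, hs, this, Option.map₂]
          | some z =>
            have hg : (v.fib y).isSome := (v.dom_eq y).mpr (by simp [h2])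
            obtain ⟨t, ht⟩ := Option.isSome_iff_exists.mp hg
            simp [h, h2, hs, ht, Option.map₂] }

/-- The identity of the partial wreath product. -/
instance {m n : ℕ} : One (PW m n) where
  one :=
    { base := 1
      fib := fun _ => some 1
      dom_eq := by intro x; simp; rfl }

/-- `chainFun L j x`: with `L` listing the elements of a block in increasing order and
`0 ≤ j < |L|` (`j` is the 0-based version of the paper's index), this is the value at `x` of
the chain `a_{i,j}`: the partial bijection with domain everything except `L[j]`,
sending `L[l] ↦ L[l+1]` for `l < j` and fixing all other points. -/
def chainFun {n : ℕ} (L : List (Fin n)) (j : ℕ) (x : Fin n) : Option (Fin n) :=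
  if x ∈ L then
    if L.idxOf x = j then none
    else if L.idxOf x < j then L[L.idxOf x + 1]?
    else some x
  else some x

/-- The generators `a_{i,j}` attached to an ordered decomposition with blocks `B i`. -/
def RGens {n s : ℕ} (B : Fin s → List (Fin n)) : Set (IS n) :=
  {a : IS n | ∃ i : Fin s, ∃ j : ℕ, j < (B i).length ∧ ∀ x, a x = chainFun (B i) j x}

/-- `R(M⃗₁, …, M⃗ₛ)`: the subsemigroup of `IS n` generated by the chains `a_{i,j}`
together with the identity map. -/
def RSec {n s : ℕ} (B : Fin s → List (Fin n)) : Set (IS n) :=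
  (Subsemigroup.closure (RGens B ∪ {1}) : Subsemigroup (IS n))

/-- A decomposition of `Fin n` into disjoint nonempty blocks, each block equipped with
a linear order, recorded by listing the elements of each block in increasing order. -/
structure OrderedPartition (n s : ℕ) where
  B : Fin s → List (Fin n)
  nonempty : ∀ i, B i ≠ []
  nodup : ∀ i, (B i).Nodup
  disjoint : ∀ i j, i ≠ j → ∀ x, x ∈ B i → x ∉ B j
  cover : ∀ x, ∃ i, x ∈ B i

/-- The chain `a_{i,j}` of the block listed by `L`, viewed inside `IS(M_i)`, i.e. embedded
into `IS n` as a partial bijection whose domain is contained in the block: it is defined on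
`L` minus `L[j]`, sends `L[l] ↦ L[l+1]` for `l < j` and fixes the other points of `L`. -/
def chainFunB {n : ℕ} (L : List (Fin n)) (j : ℕ) (x : Fin n) : Option (Fin n) :=
  if x ∈ L then
    if L.idxOf x = j then none
    else if L.idxOf x < j then L[L.idxOf x + 1]?
    else some x
  else none

/-- The generators of `R(M⃗)` inside `IS(M)` (embedded in `IS n`), `M` listed by `L`. -/
def BlockGens {n : ℕ} (L : List (Fin n)) : Set (IS n) :=
  {a : IS n | ∃ j : ℕ, j < L.length ∧ ∀ x, a x = chainFunB L j x}

/-- The identity of `IS(M)` (embedded in `IS n`): the identity map of the block listed by `L`. -/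
def idOn {n : ℕ} (L : List (Fin n)) : Set (IS n) :=
  {a : IS n | ∀ x, a x = if x ∈ L then some x else none}

/-- The R-cross-section `R(M⃗)` of `IS(M)`, embedded into `IS n`, for the block listed by `L`. -/
def RSecBlock {n : ℕ} (L : List (Fin n)) : Set (IS n) :=
  (Subsemigroup.closure (BlockGens L ∪ idOn L) : Subsemigroup (IS n))

/-- The wreath product `R_i ≀_p R(M⃗_i)` where `R(M⃗_i) ⊆ IS(M_i)`, `M_i` listed by `L`,
and `R_i = T ⊆ IS m`, realized inside `PW m n` via the natural embedding
`IS m ≀_p IS(M_i) ⊆ IS m ≀_p IS n`. -/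
def WBlock (m n : ℕ) (L : List (Fin n)) (T : Set (IS m)) : Set (PW m n) :=
  {u : PW m n | u.base ∈ RSecBlock L ∧ ∀ x f, u.fib x = some f → f ∈ T}

/-- The element `e' = (0̄, 1)` of `IS m ≀_p IS n`: the second component is the identity of
`IS n` and the first component sends every point to the empty map `0` of `IS m`. -/
def ezero (m n : ℕ) : PW m n where
  base := 1
  fib := fun _ => some ⊥
  dom_eq := by intro x; simp; rfl

/-!
If `u = s * v`, then the base of `u` factors through that of `v`, and each fibre of `u`, read
along the inverse of its base, is a fibre of `s` times the corresponding fibre of `v`; so all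
these ranges of `u` lie inside those of `v`. Conversely, under these inclusions `u = (u v⁻¹) v`,
because `v⁻¹ v` is the idempotent that restricts the base and every fibre to those ranges.
Green's `L` is the symmetric part of this preorder.
-/

namespace IS

variable {n : ℕ}

instance : Monoid (IS n) where
  mul_assoc := PEquiv.trans_assoc
  one_mul := PEquiv.refl_trans
  mul_one := PEquiv.trans_refl

lemma mul_apply (a b : IS n) (x : Fin n) : (a * b) x = (a x).bind b := rfl

lemma mem_pran_iff {a : IS n} {z : Fin n} : z ∈ pran a ↔ ∃ x, a x = some z := by
  simp only [pran, Set.mem_ofPred_eq, Option.isSome_iff_exists, PEquiv.eq_some_iff]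

lemma pran_mul_subset (a b : IS n) : pran (a * b) ⊆ pran b := by
  intro z hz
  obtain ⟨x, hx⟩ := mem_pran_iff.mp hz
  obtain ⟨y, -, hy⟩ := Option.bind_eq_some_iff.mp hx
  exact mem_pran_iff.mpr ⟨y, hy⟩

lemma mul_symm_mul_self_of_pran_subset {a b : IS n} (h : pran a ⊆ pran b) :
    a * (b.symm * b) = a := by
  ext x z
  rw [mul_apply, show b.symm * b = _ from PEquiv.symm_trans_self b]
  cases ha : a x with
  | none => simp
  | some w =>
    have hw : w ∈ pran b := h (mem_pran_iff.mpr ⟨x, ha⟩)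
    simp only [Option.bind_some, PEquiv.ofSet_eq_some_iff, Option.some_inj]
    exact ⟨fun h' => h'.1.symm, fun h' => ⟨h'.symm, h' ▸ hw⟩⟩

end IS

namespace PW

variable {m n : ℕ}

@[ext] lemma ext {u v : PW m n} (hb : u.base = v.base) (hf : u.fib = v.fib) : u = v := by
  cases u; cases v; simp_all

lemma fib_eq_none_iff (u : PW m n) (x : Fin n) : u.fib x = none ↔ u.base x = none := by
  simpa only [Option.not_isSome_iff_eq_none] using (u.dom_eq x).not

lemma mul_base (u v : PW m n) : (u * v).base = u.base * v.base := rfl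

lemma mul_fib (u v : PW m n) (x : Fin n) :
    (u * v).fib x = Option.map₂ (· * ·) (u.fib x) ((u.base x).bind v.fib) := rfl

instance : Monoid (PW m n) where
  mul_assoc u v w := by
    ext1
    · exact mul_assoc u.base v.base w.base
    · funext x
      simp only [mul_fib, mul_base, IS.mul_apply]
      cases u.base x with
      | none => simp
      | some y => exact Option.map₂_assoc fun _ _ _ => mul_assoc _ _ _
  one_mul u := by
    ext1
    · exact one_mul u.base
    · funext x
      show Option.map₂ (· * ·) (some 1) (u.fib x) = u.fib x
      simp
  mul_one u := by
    ext1
    · exact mul_one u.base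
    · funext x
      show Option.map₂ (· * ·) (u.fib x) ((u.base x).bind fun _ => some 1) = u.fib x
      cases h : u.base x with
      | none => simp [(fib_eq_none_iff u x).mpr h]
      | some y => simp

/-- `u.ranFib z` is the paper's `f^{a⁻¹}(z)` for `u = (f, a)`. -/
def ranFib (u : PW m n) (z : Fin n) : Option (IS m) := (u.base.symm z).bind u.fib

lemma ranFib_eq_some_iff {u : PW m n} {z : Fin n} {f : IS m} :
    u.ranFib z = some f ↔ ∃ x, u.base.symm z = some x ∧ u.fib x = some f :=
  Option.bind_eq_some_iff

lemma isSome_ranFib_iff (u : PW m n) (z : Fin n) : (u.ranFib z).isSome ↔ z ∈ pran u.base := by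
  cases h : u.base.symm z with
  | none => simp [ranFib, pran, h]
  | some x => simp [ranFib, pran, h, u.dom_eq, (PEquiv.eq_some_iff _).mp h]

instance : Inv (PW m n) where
  inv v :=
    { base := v.base.symm
      fib := fun z => (v.ranFib z).map PEquiv.symm
      dom_eq := fun z => by rw [Option.isSome_map, isSome_ranFib_iff]; rfl }

/-- Range description of the preorder `u ≤_L v`, i.e. `u ∈ S¹ v`. -/
def RanLE (u v : PW m n) : Prop :=
  pran u.base ⊆ pran v.base ∧
    ∀ z f g, u.ranFib z = some f → v.ranFib z = some g → pran f ⊆ pran g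

lemma ranLE_of_eq_mul {u v s : PW m n} (hs : u = s * v) : RanLE u v := by
  subst hs
  refine ⟨IS.pran_mul_subset _ _, fun z f g hf hg => ?_⟩
  obtain ⟨x, hx, hfx⟩ := ranFib_eq_some_iff.mp hf
  obtain ⟨h, g', -, hg', rfl⟩ := Option.map₂_eq_some_iff.mp hfx
  have hsx : s.base x = v.base.symm z := by
    obtain ⟨y, hy, hvy⟩ := Option.bind_eq_some_iff.mp ((PEquiv.eq_some_iff _).mp hx)
    rw [hy, (PEquiv.eq_some_iff _).mpr hvy]
  have : g' = g := by
    rw [← Option.some_inj, ← hg, ← Option.mem_def.mp hg', hsx]; rfl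
  subst this
  exact IS.pran_mul_subset h g'

lemma mul_inv_mul_of_ranLE {u v : PW m n} (h : RanLE u v) : u * v⁻¹ * v = u := by
  rw [mul_assoc]
  ext1
  · exact IS.mul_symm_mul_self_of_pran_subset h.1
  · funext x
    cases hux : u.base x with
    | none => simp [mul_fib, hux, (fib_eq_none_iff u x).mpr hux]
    | some z =>
      obtain ⟨f, hf⟩ := Option.isSome_iff_exists.mp ((u.dom_eq x).mpr (by simp [hux]))
      have hu : u.ranFib z = some f :=
        ranFib_eq_some_iff.mpr ⟨x, (PEquiv.eq_some_iff _).mpr hux, hf⟩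
      obtain ⟨g, hg⟩ := Option.isSome_iff_exists.mp
        ((isSome_ranFib_iff v z).mpr (h.1 (IS.mem_pran_iff.mpr ⟨x, hux⟩)))
      have hfg : f * (g.symm * g) = f := IS.mul_symm_mul_self_of_pran_subset (h.2 z f g hu hg)
      rw [mul_fib, hux, Option.bind_some]
      show Option.map₂ (· * ·) (u.fib x)
        (Option.map₂ (· * ·) ((v.ranFib z).map PEquiv.symm) (v.ranFib z)) = u.fib x
      simp [hf, hg, hfg]

lemma exists_eq_mul_iff_ranLE (u v : PW m n) : (∃ s, u = s * v) ↔ RanLE u v :=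
  ⟨fun ⟨_, hs⟩ => ranLE_of_eq_mul hs, fun h => ⟨u * v⁻¹, (mul_inv_mul_of_ranLE h).symm⟩⟩

end PW

lemma greenL_iff_exists_eq_mul {S : Type*} [Monoid S] (u v : S) :
    GreenL u v ↔ (∃ s, u = s * v) ∧ ∃ t, v = t * u := by
  constructor
  · intro h
    have hu : u ∈ {w | ∃ s, w = s * u} := ⟨1, (one_mul u).symm⟩
    have hv : v ∈ {w | ∃ s, w = s * v} := ⟨1, (one_mul v).symm⟩
    rw [h] at hu
    rw [← h] at hv
    exact ⟨hu, hv⟩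
  · rintro ⟨⟨s, hs⟩, ⟨t, ht⟩⟩
    apply Set.Subset.antisymm
    · rintro w ⟨p, rfl⟩
      exact ⟨p * s, by rw [hs, mul_assoc]⟩
    · rintro w ⟨p, rfl⟩
      exact ⟨p * t, by rw [ht, mul_assoc]⟩

/-- `(f,a) L (g,b)` in `IS m ≀_p IS n` iff `ran a = ran b` and for every
`z ∈ ran a`, `ran (g^{b⁻¹}(z)) = ran (f^{a⁻¹}(z))`, i.e. `ran (f (z a⁻¹)) = ran (g (z b⁻¹))`. -/
theorem greenL_wreath_iff (m n : ℕ) (u v : PW m n) :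
    GreenL u v ↔
      (pran u.base = pran v.base ∧
        ∀ z x y : Fin n, u.base.symm z = some x → v.base.symm z = some y →
          ∀ f g : IS m, u.fib x = some f → v.fib y = some g → pran f = pran g) := by
  rw [greenL_iff_exists_eq_mul, PW.exists_eq_mul_iff_ranLE, PW.exists_eq_mul_iff_ranLE]
  constructor
  · rintro ⟨⟨hran, hfib⟩, hran', hfib'⟩
    refine ⟨hran.antisymm hran', fun z x y hx hy f g hf hg => ?_⟩
    have hu : u.ranFib z = some f := PW.ranFib_eq_some_iff.mpr ⟨x, hx, hf⟩
    have hv : v.ranFib z = some g := PW.ranFib_eq_some_iff.mpr ⟨y, hy, hg⟩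
    exact (hfib z f g hu hv).antisymm (hfib' z g f hv hu)
  · rintro ⟨hran, hfib⟩
    have hfib_ran : ∀ z f g, u.ranFib z = some f → v.ranFib z = some g → pran f = pran g := by
      intro z f g hu hv
      obtain ⟨x, hx, hf⟩ := PW.ranFib_eq_some_iff.mp hu
      obtain ⟨y, hy, hg⟩ := PW.ranFib_eq_some_iff.mp hv
      exact hfib z x y hx hy f g hf hg
    exact ⟨⟨hran.subset, fun z f g hu hv => (hfib_ran z f g hu hv).subset⟩,
      hran.superset, fun z g f hv hu => (hfib_ran z f g hu hv).superset⟩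

end ISW
end
end

section
/- Let R = R(M⃗) be a single-block R-cross-section of IS_n, corresponding to the trivial decomposition N_n = M with linear order M = {m_1 < m_2 < … < m_n}. Then the idempotents of R are exactly the empty map 0 together with the restrictions of the identity map to the upper segments {m_j, m_{j+1}, …, m_n}, for 1 ≤ j ≤ n. -/
open scoped Classical

noncomputable section
/-!
An idempotent partial bijection is a partial identity. Every generator `a_j` of `R(M⃗)`, and
hence every element of `R(M⃗)`, is strictly increasing with respect to the position in `M⃗`
and has a range that is closed upward in that order. Domain and range of a partial identity
coincide, so the domain of an idempotent of `R(M⃗)` is an upward closed subset of the chain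
`m_1 < ⋯ < m_n`: empty or an upper segment.
-/

theorem PEquiv.eq_of_trans_self {α : Type*} {b : α ≃. α} {x y : α} (h : b.trans b = b)
    (hxy : b x = some y) : y = x := by
  have hyy : b y = some y := by
    simpa [PEquiv.trans, hxy] using congrArg (fun f : α ≃. α => f x) h
  exact (PEquiv.inj b hxy hyy).symm

theorem PEquiv.eq_ofSet_of_trans_self {α : Type*} {b : α ≃. α} (h : b.trans b = b) :
    b = PEquiv.ofSet {x | (b x).isSome} := by
  refine PEquiv.ext fun x => ?_
  cases hx : b x with
  | none => simp [PEquiv.ofSet, hx]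
  | some y => obtain rfl := PEquiv.eq_of_trans_self h hx; simp [PEquiv.ofSet, hx]

theorem List.Nodup.mem_drop_iff_le_idxOf {α : Type*} [BEq α] [LawfulBEq α] {l : List α} {a : α}
    {j : ℕ} (hl : l.Nodup) (ha : a ∈ l) : a ∈ l.drop j ↔ j ≤ l.idxOf a := by
  have hdisj : (l.take j ++ l.drop j).Nodup := by rwa [l.take_append_drop]
  rw [List.nodup_append] at hdisj
  constructor
  · intro hd
    by_contra hlt
    exact hdisj.2.2 a ((List.mem_take_iff_idxOf_lt ha).2 (by omega)) a hd rfl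
  · intro hle
    have : a ∉ l.take j := fun ht => by have := (List.mem_take_iff_idxOf_lt ha).1 ht; omega
    rw [← l.take_append_drop j, List.mem_append] at ha
    exact ha.resolve_left this

theorem List.Nodup.mem_of_length_eq_card {α : Type*} [Fintype α] {l : List α} (hl : l.Nodup)
    (hlen : l.length = Fintype.card α) (a : α) : a ∈ l := by
  rw [← List.mem_toFinset, Finset.eq_univ_of_card l.toFinset
    (by rw [List.toFinset_card_of_nodup hl, hlen])]
  exact Finset.mem_univ a

theorem Set.eq_empty_or_eq_setOf_le {α β : Type*} [LinearOrder β] [WellFoundedLT β]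
    (r : α → β) {s : Set α} (hs : ∀ ⦃x z⦄, x ∈ s → r x ≤ r z → z ∈ s) :
    s = ∅ ∨ ∃ x₀ ∈ s, s = {z | r x₀ ≤ r z} := by
  rcases s.eq_empty_or_nonempty with hempty | hne
  · exact Or.inl hempty
  obtain ⟨x₀, hx₀, hmin⟩ := exists_minimalFor_of_wellFoundedLT (· ∈ s) r hne
  refine Or.inr ⟨x₀, hx₀, Set.ext fun z => ⟨fun hz => ?_, fun hz => hs hx₀ hz⟩⟩
  exact le_of_not_gt fun hlt => (hmin hz hlt.le).not_gt hlt

namespace ISW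

section RankOrder

variable {α β : Type*} [LinearOrder β] (r : α → β)

structure StrictMonoUpperRange (b : α ≃. α) : Prop where
  strictMono ⦃x y x' y' : α⦄ : b x = some x' → b y = some y' → r x < r y → r x' < r y'
  range_upward ⦃x y z : α⦄ : b x = some y → r y ≤ r z → ∃ w, b w = some z

namespace StrictMonoUpperRange

variable {r}

theorem refl : StrictMonoUpperRange r (PEquiv.refl α) where
  strictMono x y x' y' hx hy := by
    cases hx; cases hy; exact id
  range_upward _ _ z _ _ := ⟨z, rfl⟩

theorem trans {b c : α ≃. α} (hb : StrictMonoUpperRange r b) (hc : StrictMonoUpperRange r c) :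
    StrictMonoUpperRange r (b.trans c) where
  strictMono x y x' y' hx hy hlt := by
    rw [PEquiv.trans_eq_some] at hx hy
    obtain ⟨u, hu, hu'⟩ := hx
    obtain ⟨v, hv, hv'⟩ := hy
    exact hc.strictMono hu' hv' (hb.strictMono hu hv hlt)
  range_upward x y z hxy hyz := by
    rw [PEquiv.trans_eq_some] at hxy
    obtain ⟨u, hu, hu'⟩ := hxy
    obtain ⟨w, hw⟩ := hc.range_upward hu' hyz
    -- `c` is strictly monotone, hence reflects `≤`
    have huw : r u ≤ r w := le_of_not_gt fun hlt => (hc.strictMono hw hu' hlt).not_ge hyz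
    obtain ⟨v, hv⟩ := hb.range_upward hu huw
    exact ⟨v, (PEquiv.trans_eq_some _ _ _ _).2 ⟨w, hv, hw⟩⟩

theorem mem_of_le {s : Set α} (hs : StrictMonoUpperRange r (PEquiv.ofSet s)) ⦃x z : α⦄
    (hx : x ∈ s) (hxz : r x ≤ r z) : z ∈ s := by
  obtain ⟨w, hw⟩ := hs.range_upward (PEquiv.ofSet_eq_some_self_iff.2 hx) hxz
  exact (PEquiv.ofSet_eq_some_iff.1 hw).2

end StrictMonoUpperRange

end RankOrder

theorem mul_apply {n : ℕ} (a b : IS n) (x : Fin n) : (a * b) x = (a x).bind b := rfl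

section Chain

variable {n : ℕ} {L : List (Fin n)} {j : ℕ}

theorem chainFun_eq_some (hnd : L.Nodup) (hj : j < L.length) {x y : Fin n}
    (hxy : chainFun L j x = some y) :
    (L.idxOf x < j ∧ L.idxOf y = L.idxOf x + 1) ∨ (j < L.idxOf x ∧ y = x) := by
  unfold chainFun at hxy
  by_cases hx : x ∈ L
  · rw [if_pos hx] at hxy
    rcases lt_trichotomy (L.idxOf x) j with hlt | heq | hgt
    · have hsucc : L.idxOf x + 1 < L.length := by omega
      rw [if_neg hlt.ne, if_pos hlt, List.getElem?_eq_getElem hsucc, Option.some_inj] at hxy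
      subst hxy
      exact Or.inl ⟨hlt, hnd.idxOf_getElem _ hsucc⟩
    · simp [heq] at hxy
    · rw [if_neg hgt.ne', if_neg hgt.not_gt, Option.some_inj] at hxy
      exact Or.inr ⟨hgt, hxy.symm⟩
  · rw [if_neg hx, Option.some_inj] at hxy
    exact Or.inr ⟨List.idxOf_eq_length hx ▸ hj, hxy.symm⟩

theorem exists_chainFun_eq_some (hnd : L.Nodup) (hj : j < L.length) {z : Fin n}
    (hz : 0 < L.idxOf z) : ∃ x, chainFun L j x = some z := by
  by_cases hzj : L.idxOf z ≤ j
  · have hzL : L.idxOf z < L.length := by omega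
    have hpred : L.idxOf z - 1 < L.length := by omega
    refine ⟨L[L.idxOf z - 1], ?_⟩
    rw [chainFun, if_pos (List.getElem_mem hpred), hnd.idxOf_getElem _ hpred, if_neg (by omega),
      if_pos (by omega), Nat.sub_add_cancel hz, List.getElem?_eq_getElem hzL, List.getElem_idxOf]
  · refine ⟨z, ?_⟩
    unfold chainFun
    split_ifs <;> first | omega | rfl

theorem strictMonoUpperRange_of_chainFun (hnd : L.Nodup) (hj : j < L.length) {b : IS n}
    (hb : ∀ x, b x = chainFun L j x) : StrictMonoUpperRange L.idxOf b where
  strictMono x y x' y' hx hy hlt := by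
    rw [hb] at hx hy
    rcases chainFun_eq_some hnd hj hx with ⟨_, _⟩ | ⟨_, rfl⟩ <;>
      rcases chainFun_eq_some hnd hj hy with ⟨_, _⟩ | ⟨_, rfl⟩ <;> omega
  range_upward x y z hxy hyz := by
    rw [hb] at hxy
    have hy : 0 < L.idxOf y := by
      rcases chainFun_eq_some hnd hj hxy with ⟨_, _⟩ | ⟨_, rfl⟩ <;> omega
    simp_rw [hb]
    exact exists_chainFun_eq_some hnd hj (by omega)

theorem strictMonoUpperRange_of_mem_RSec (hnd : L.Nodup) {a : IS n}
    (ha : a ∈ RSec fun _ : Fin 1 => L) : StrictMonoUpperRange L.idxOf a := by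
  induction ha using Subsemigroup.closure_induction with
  | mem b hb =>
    rcases hb with ⟨_, j, hj, hgen⟩ | rfl
    · exact strictMonoUpperRange_of_chainFun hnd hj hgen
    · exact StrictMonoUpperRange.refl
  | mul b c _ _ hb hc => exact hb.trans hc

end Chain

-- `L.drop j` is the paper's segment `{m_{j+1}, …, m_n}`: here `j` is 0-based.
/-- the idempotents of the single-block R-cross-section `R(M⃗)` of `IS n`
with `M = {m_1 < … < m_n}` listed by `L` are exactly the empty map `0` together with the
restrictions of the identity to the upper segments `{m_{j+1}, …, m_n}` (`L.drop j`,
`0 ≤ j < n`). -/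
theorem single_block_idempotents (n : ℕ) (L : List (Fin n)) (hnd : L.Nodup)
    (hlen : L.length = n) (a : IS n) (ha : a ∈ RSec (fun _ : Fin 1 => L)) :
    a * a = a ↔
      ((∀ x, a x = none) ∨
        ∃ j : ℕ, j < n ∧ ∀ x : Fin n, a x = if x ∈ L.drop j then some x else none) := by
  have hmem : ∀ x, x ∈ L := hnd.mem_of_length_eq_card (by rw [hlen, Fintype.card_fin])
  constructor
  · intro h
    obtain ⟨s, rfl⟩ : ∃ s, a = PEquiv.ofSet s :=
      ⟨_, by convert PEquiv.eq_ofSet_of_trans_self h⟩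
    have hmono := strictMonoUpperRange_of_mem_RSec hnd ha
    rcases Set.eq_empty_or_eq_setOf_le L.idxOf hmono.mem_of_le with rfl | ⟨x₀, -, rfl⟩
    · exact Or.inl fun x => by simp [PEquiv.ofSet]
    · refine Or.inr ⟨L.idxOf x₀, (List.idxOf_lt_length_of_mem (hmem x₀)).trans_eq hlen,
        fun x => ?_⟩
      simp [PEquiv.ofSet, hnd.mem_drop_iff_le_idxOf (hmem x)]
  · rintro (h | ⟨j, -, h⟩) <;> refine PEquiv.ext fun x => ?_
    · simp [mul_apply, h]
    · by_cases hx : x ∈ L.drop j <;> simp [mul_apply, h, hx]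
end ISW
end
end
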